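/- The quantile D index decreases under a uniform increase in incomes: for every c > 0 and every p ∈ (0,1), qD(p; Q + c) ≤ qD(p; Q), and consequently qDI(Q + c) ≤ qDI(Q), where Q + c denotes the function p ↦ Q(p) + c (the quantile function of the shifted variable X + c). -/

import Mathlib

open MeasureTheory Filter Set

/-- The quantile D curve `qD(p; Q) = 1 - Q(p/2)/Q(1 - p/2)`. -/
noncomputable def qDcurve (Q : ℝ → ℝ) (p : ℝ) : ℝ := 1 - Q (p / 2) / Q (1 - p / 2)

/-- The quantile D index `qDI(Q) = ∫₀¹ qD(p; Q) dp`. -/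
noncomputable def qDI (Q : ℝ → ℝ) : ℝ := ∫ p in (0 : ℝ)..1, qDcurve Q p

lemma mem1 {p : ℝ} (hp : p ∈ Set.Ioo (0 : ℝ) 1) : p / 2 ∈ Set.Ioo (0 : ℝ) 1 := by
  obtain ⟨h1, h2⟩ := hp; constructor <;> linarith

lemma mem2 {p : ℝ} (hp : p ∈ Set.Ioo (0 : ℝ) 1) : 1 - p / 2 ∈ Set.Ioo (0 : ℝ) 1 := by
  obtain ⟨h1, h2⟩ := hp; constructor <;> linarith

lemma qD_antitoneOn (Q : ℝ → ℝ)
    (hQpos : ∀ p ∈ Set.Ioo (0 : ℝ) 1, 0 < Q p)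
    (hQmono : MonotoneOn Q (Set.Ioo (0 : ℝ) 1)) :
    AntitoneOn (qDcurve Q) (Set.Ioo (0 : ℝ) 1) := by
  intro p hp q hq hpq
  have hap : 0 < Q (p / 2) := hQpos _ (mem1 hp)
  have haq : 0 < Q (q / 2) := hQpos _ (mem1 hq)
  have hbq : 0 < Q (1 - q / 2) := hQpos _ (mem2 hq)
  have h1 : Q (p / 2) ≤ Q (q / 2) := hQmono (mem1 hp) (mem1 hq) (by linarith)
  have h2 : Q (1 - q / 2) ≤ Q (1 - p / 2) := hQmono (mem2 hq) (mem2 hp) (by linarith)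
  have : Q (p / 2) / Q (1 - p / 2) ≤ Q (q / 2) / Q (1 - q / 2) :=
    div_le_div₀ haq.le h1 hbq h2
  simp only [qDcurve]; linarith

lemma qD_bounds (Q : ℝ → ℝ)
    (hQpos : ∀ p ∈ Set.Ioo (0 : ℝ) 1, 0 < Q p)
    (hQmono : MonotoneOn Q (Set.Ioo (0 : ℝ) 1))
    {p : ℝ} (hp : p ∈ Set.Ioo (0 : ℝ) 1) :
    qDcurve Q p ∈ Set.Icc (0 : ℝ) 1 := by
  have hap : 0 < Q (p / 2) := hQpos _ (mem1 hp)
  have hbp : 0 < Q (1 - p / 2) := hQpos _ (mem2 hp)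
  have h1 : Q (p / 2) ≤ Q (1 - p / 2) := hQmono (mem1 hp) (mem2 hp) (by
    obtain ⟨h1, h2⟩ := hp; linarith)
  have h2 : Q (p / 2) / Q (1 - p / 2) ≤ 1 := by
    rw [div_le_one hbp]; exact h1
  have h3 : 0 ≤ Q (p / 2) / Q (1 - p / 2) := by positivity
  constructor <;> (simp only [qDcurve]; linarith)

lemma qD_integrableOn (Q : ℝ → ℝ)
    (hQpos : ∀ p ∈ Set.Ioo (0 : ℝ) 1, 0 < Q p)
    (hQmono : MonotoneOn Q (Set.Ioo (0 : ℝ) 1)) :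
    IntegrableOn (qDcurve Q) (Set.Ioo (0 : ℝ) 1) := by
  have hmeas : AEMeasurable (qDcurve Q) (volume.restrict (Set.Ioo (0 : ℝ) 1)) :=
    aemeasurable_restrict_of_antitoneOn measurableSet_Ioo
      (qD_antitoneOn Q hQpos hQmono)
  refine Integrable.mono' (g := fun _ => (1 : ℝ))
    (integrableOn_const (by simp)) hmeas.aestronglyMeasurable ?_
  rw [ae_restrict_iff' measurableSet_Ioo]
  filter_upwards with p hp
  have := qD_bounds Q hQpos hQmono hp
  rw [Real.norm_eq_abs, abs_le]
  exact ⟨by linarith [this.1], this.2⟩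

/-- The quantile D index decreases under a uniform increase in incomes: for every
`c > 0`, `qD(p; Q + c) ≤ qD(p; Q)` for all `p ∈ (0,1)`, and `qDI(Q + c) ≤ qDI(Q)`. -/
theorem qD_decreases_under_uniform_increase
(Q : ℝ → ℝ)
    (hQpos : ∀ p ∈ Set.Ioo (0 : ℝ) 1, 0 < Q p)
    (hQmono : MonotoneOn Q (Set.Ioo (0 : ℝ) 1))
    (c : ℝ) (hc : 0 < c) :
    (∀ p ∈ Set.Ioo (0 : ℝ) 1, qDcurve (fun q => Q q + c) p ≤ qDcurve Q p) ∧
      qDI (fun q => Q q + c) ≤ qDI Q := by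
  have hQ'pos : ∀ p ∈ Set.Ioo (0 : ℝ) 1, 0 < Q p + c := fun p hp => by
    linarith [hQpos p hp]
  have hQ'mono : MonotoneOn (fun q => Q q + c) (Set.Ioo (0 : ℝ) 1) := fun a ha b hb hab => by
    simpa using hQmono ha hb hab
  have hpt : ∀ p ∈ Set.Ioo (0 : ℝ) 1, qDcurve (fun q => Q q + c) p ≤ qDcurve Q p := by
    intro p hp
    have hap : 0 < Q (p / 2) := hQpos _ (mem1 hp)
    have hbp : 0 < Q (1 - p / 2) := hQpos _ (mem2 hp)
    have h1 : Q (p / 2) ≤ Q (1 - p / 2) := hQmono (mem1 hp) (mem2 hp) (by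
      obtain ⟨h1, h2⟩ := hp; linarith)
    have key : Q (p / 2) / Q (1 - p / 2) ≤ (Q (p / 2) + c) / (Q (1 - p / 2) + c) := by
      rw [div_le_div_iff₀ hbp (by linarith)]
      nlinarith
    simp only [qDcurve]; linarith
  refine ⟨hpt, ?_⟩
  have hI1 := qD_integrableOn Q hQpos hQmono
  have hI2 := qD_integrableOn (fun q => Q q + c) hQ'pos hQ'mono
  have h01 : (0 : ℝ) ≤ 1 := by norm_num
  simp only [qDI, intervalIntegral.integral_of_le h01, integral_Ioc_eq_integral_Ioo]
  exact setIntegral_mono_on hI2 hI1 measurableSet_Ioo hpt
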